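/- There exists a one-way probabilistic blind one-counter automaton (1P1BCA) over the alphabet {a,b} that recognizes the language EQ* with negative one-sided error bound 1/3: every string in EQ* is accepted with probability 1, and every string over {a,b} not in EQ* is accepted with probability at most 1/3. -/

import Mathlib

/-- Input symbols extended with the left (`cent`) and right (`dollar`) end-markers. -/
inductive TSym (α : Type) : Type
  | cent : TSym α
  | letter : α → TSym α
  | dollar : TSym α

/-- The tape content `¢ w $` for an input word `w`. -/
def tagged {α : Type} (w : List α) : List (TSym α) :=
  TSym.cent :: (w.map TSym.letter ++ [TSym.dollar])

/-- A one-way probabilistic blind one-counter automaton: no zero-test during the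
computation, and acceptance additionally requires the counter to be zero at the end. -/
structure OneP1BCA (α : Type) where
  Q : Type
  [fintypeQ : Fintype Q]
  [decQ : DecidableEq Q]
  q0 : Q
  acc : Finset Q
  m : ℕ
  δ : Q → TSym α → Q → ℤ → ℝ
  nonneg : ∀ q σ q' c, 0 ≤ δ q σ q' c
  support : ∀ q σ q' c, δ q σ q' c ≠ 0 → |c| ≤ (m : ℤ)
  total : ∀ q σ, (∑ q' : Q, ∑ c ∈ Finset.Icc (-(m : ℤ)) (m : ℤ), δ q σ q' c) = 1

attribute [instance] OneP1BCA.fintypeQ OneP1BCA.decQ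

namespace OneP1BCA

variable {α : Type} (M : OneP1BCA α)

/-- One step of the evolution of the probability distribution over configurations. -/
noncomputable def stepD (μ : M.Q × ℤ → ℝ) (σ : TSym α) : M.Q × ℤ → ℝ :=
  fun p' => ∑ q : M.Q, ∑ c ∈ Finset.Icc (-(M.m : ℤ)) (M.m : ℤ),
    μ (q, p'.2 - c) * M.δ q σ p'.1 c

/-- Initial distribution: point mass on `(q0, 0)`. -/
def initD : M.Q × ℤ → ℝ := fun p => if p = (M.q0, 0) then 1 else 0

/-- Distribution over configurations after reading `¢ w $`. -/
noncomputable def finalD (w : List α) : M.Q × ℤ → ℝ := (tagged w).foldl M.stepD M.initD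

/-- Acceptance probability: total probability of paths ending in an accepting
state with counter value exactly `0`. -/
noncomputable def accProb (w : List α) : ℝ :=
  ∑ q ∈ M.acc, M.finalD w (q, 0)

/-- `M` recognizes `L` with negative one-sided error bound `ε`. -/
def recognizesNegOneSided (L : Set (List α)) (ε : ℝ) : Prop :=
  (∀ w ∈ L, M.accProb w = 1) ∧ (∀ w ∉ L, M.accProb w ≤ ε)

end OneP1BCA

/-- The alphabet `{a, b}`. -/
inductive Γ2 : Type
  | a : Γ2
  | b : Γ2
deriving DecidableEq

/-- The language `EQ = { a^n b^n : n > 0 }`. -/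
def EQ : Language Γ2 :=
  {w | ∃ n : ℕ, 0 < n ∧ w = List.replicate n Γ2.a ++ List.replicate n Γ2.b}

/-- The Kleene closure `EQ*`. -/
def EQstar : Language Γ2 := KStar.kstar EQ

namespace Stmt11

inductive St : Type
  | s0 | A (i : Fin 3) | B (i : Fin 3) | F | D
deriving DecidableEq

def StU : Finset St := {.s0, .A 0, .A 1, .A 2, .B 0, .B 1, .B 2, .F, .D}

instance : Fintype St := ⟨StU, by
  intro x
  cases x with
  | A i => fin_cases i <;> decide
  | B i => fin_cases i <;> decide
  | _ => decide⟩

lemma univ_St : (Finset.univ : Finset St) = StU := rfl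

lemma sum_St {M : Type*} [AddCommMonoid M] (f : St → M) :
    ∑ q : St, f q = f .s0 + f (.A 0) + f (.A 1) + f (.A 2) + f (.B 0) + f (.B 1)
      + f (.B 2) + f .F + f .D := by
  rw [univ_St, StU]
  rw [Finset.sum_insert (by decide), Finset.sum_insert (by decide),
    Finset.sum_insert (by decide), Finset.sum_insert (by decide),
    Finset.sum_insert (by decide), Finset.sum_insert (by decide),
    Finset.sum_insert (by decide), Finset.sum_insert (by decide),
    Finset.sum_singleton]
  simp [add_assoc]

lemma Icc33 : Finset.Icc (-3:ℤ) 3 = ({-3,-2,-1,0,1,2,3} : Finset ℤ) := by decide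

def coeff (i : Fin 3) : ℤ := (i.val : ℤ) + 1

noncomputable def pt (q : St) (c : ℤ) : St → ℤ → ℝ := fun q' c' => if q' = q ∧ c' = c then 1 else 0

noncomputable def br : St → ℤ → ℝ := fun q' c' =>
  (pt (.A 0) 1 q' c' + pt (.A 1) 2 q' c' + pt (.A 2) 3 q' c') / 3

noncomputable def dd : St → TSym Γ2 → St → ℤ → ℝ
  | .s0, .cent => pt .s0 0
  | .s0, .letter .a => br
  | .s0, .letter .b => pt .D 0
  | .s0, .dollar => pt .F 0
  | .A i, .letter .a => pt (.A i) (coeff i)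
  | .A i, .letter .b => pt (.B i) (-(coeff i))
  | .A _, .cent => pt .D 0
  | .A _, .dollar => pt .D 0
  | .B _, .letter .a => br
  | .B i, .letter .b => pt (.B i) (-(coeff i))
  | .B _, .dollar => pt .F 0
  | .B _, .cent => pt .D 0
  | .F, _ => pt .D 0
  | .D, _ => pt .D 0

lemma pt_nonneg (q : St) (c : ℤ) (q' : St) (c' : ℤ) : 0 ≤ pt q c q' c' := by
  unfold pt; split <;> norm_num

lemma br_nonneg (q' : St) (c' : ℤ) : 0 ≤ br q' c' := by
  unfold br
  have := pt_nonneg (.A 0) 1 q' c'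
  have := pt_nonneg (.A 1) 2 q' c'
  have := pt_nonneg (.A 2) 3 q' c'
  positivity

lemma pt_supp {q : St} {c : ℤ} (h : |c| ≤ 3) (q' : St) (c' : ℤ) :
    pt q c q' c' ≠ 0 → |c'| ≤ 3 := by
  unfold pt; split
  · rename_i hh; rcases hh with ⟨_, rfl⟩; exact fun _ => h
  · simp

lemma coeff_abs (i : Fin 3) : |coeff i| ≤ 3 := by
  rw [abs_le]; unfold coeff; have := i.2; omega

lemma br_supp (q' : St) (c' : ℤ) : br q' c' ≠ 0 → |c'| ≤ 3 := by
  intro h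
  by_contra hc
  apply h
  unfold br pt
  rw [if_neg (by rintro ⟨_, rfl⟩; exact hc (by decide)),
    if_neg (by rintro ⟨_, rfl⟩; exact hc (by decide)),
    if_neg (by rintro ⟨_, rfl⟩; exact hc (by decide))]
  norm_num

lemma pt_total (q : St) (c : ℤ) (h : c ∈ Finset.Icc (-3:ℤ) 3) :
    (∑ q' : St, ∑ c' ∈ Finset.Icc (-3:ℤ) 3, pt q c q' c') = 1 := by
  have : ∀ q' : St, (∑ c' ∈ Finset.Icc (-3:ℤ) 3, pt q c q' c') = if q' = q then 1 else 0 := by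
    intro q'
    unfold pt
    by_cases hq : q' = q <;> simp [hq, Finset.sum_ite_eq' _ c (fun _ => (1:ℝ)), h]
  simp only [this]
  rw [Finset.sum_ite_eq' Finset.univ q (fun _ => (1:ℝ))]
  simp

lemma br_total : (∑ q' : St, ∑ c' ∈ Finset.Icc (-3:ℤ) 3, br q' c') = 1 := by
  unfold br
  have h1 := pt_total (.A 0) 1 (by decide)
  have h2 := pt_total (.A 1) 2 (by decide)
  have h3 := pt_total (.A 2) 3 (by decide)
  simp only [add_div, Finset.sum_add_distrib] at *
  simp only [← Finset.sum_div]
  rw [h1, h2, h3]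
  norm_num

end Stmt11

namespace Stmt11

noncomputable def M : OneP1BCA Γ2 where
  Q := St
  q0 := .s0
  acc := {.F}
  m := 3
  δ := dd
  nonneg := by
    intro q σ q' c
    rcases q with _ | i | i | _ | _ <;> rcases σ with _ | s | _ <;> try rcases s with _ | _ <;>
      skip
    all_goals simp only [dd]
    all_goals first
      | exact pt_nonneg _ _ _ _
      | exact br_nonneg _ _
  support := by
    intro q σ q' c
    have h3 : ((3:ℕ):ℤ) = 3 := by norm_num
    rw [h3]
    rcases q with _ | i | i | _ | _ <;> rcases σ with _ | s | _ <;> try rcases s with _ | _ <;>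
      skip
    all_goals simp only [dd]
    all_goals first
      | exact pt_supp (by decide) _ _
      | exact pt_supp (by simpa using coeff_abs i) _ _
      | exact br_supp _ _
  total := by
    intro q σ
    have h3 : ((3:ℕ):ℤ) = 3 := by norm_num
    rw [h3]
    rcases q with _ | i | i | _ | _ <;> rcases σ with _ | s | _ <;> try rcases s with _ | _ <;>
      skip
    all_goals simp only [dd]
    all_goals first
      | exact br_total
      | exact pt_total _ _ (by decide)
      | exact pt_total _ _ (by simp [Finset.mem_Icc, abs_le.mp (coeff_abs i), neg_le.mp (abs_le.mp (coeff_abs i)).1])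

attribute [reducible] M

end Stmt11

namespace Stmt11

lemma stepD_eval (μ : St × ℤ → ℝ) (σ : TSym Γ2) (q' : St) (n : ℤ) :
    M.stepD μ σ (q', n)
      = ∑ q : St, ∑ c ∈ Finset.Icc (-3:ℤ) 3, μ (q, n - c) * dd q σ q' c := by
  have h3 : ((3:ℕ):ℤ) = 3 := by norm_num
  simp only [OneP1BCA.stepD, M, h3]

lemma inner_pt (μ : St × ℤ → ℝ) (q q' q₁ : St) (n : ℤ) (c₁ : ℤ)
    (h : c₁ ∈ Finset.Icc (-3:ℤ) 3) :
    ∑ c ∈ Finset.Icc (-3:ℤ) 3, μ (q, n - c) * pt q₁ c₁ q' c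
      = if q' = q₁ then μ (q, n - c₁) else 0 := by
  rw [Finset.sum_eq_single_of_mem c₁ h]
  · by_cases hq : q' = q₁ <;> simp [pt, hq]
  · intro b _ hbne; simp [pt, hbne]

lemma inner_br (μ : St × ℤ → ℝ) (q q' : St) (n : ℤ) :
    ∑ c ∈ Finset.Icc (-3:ℤ) 3, μ (q, n - c) * br q' c
      = ((if q' = .A 0 then μ (q, n - 1) else 0) + (if q' = .A 1 then μ (q, n - 2) else 0)
        + (if q' = .A 2 then μ (q, n - 3) else 0)) / 3 := by
  have e : ∀ c, μ (q, n - c) * br q' c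
      = (μ (q, n - c) * pt (.A 0) 1 q' c + μ (q, n - c) * pt (.A 1) 2 q' c
        + μ (q, n - c) * pt (.A 2) 3 q' c) / 3 := by
    intro c; unfold br; ring
  simp only [e]
  rw [← Finset.sum_div, Finset.sum_add_distrib, Finset.sum_add_distrib,
    inner_pt μ q q' _ n 1 (by decide), inner_pt μ q q' _ n 2 (by decide),
    inner_pt μ q q' _ n 3 (by decide)]

lemma step_cent_s0 (μ : St × ℤ → ℝ) (n : ℤ) :
    M.stepD μ .cent (.s0, n) = μ (.s0, n) := by
  rw [stepD_eval, sum_St]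
  simp only [dd]
  rw [inner_pt _ _ _ _ _ _ (by decide), inner_pt _ _ _ _ _ _ (by decide),
    inner_pt _ _ _ _ _ _ (by decide), inner_pt _ _ _ _ _ _ (by decide),
    inner_pt _ _ _ _ _ _ (by decide), inner_pt _ _ _ _ _ _ (by decide),
    inner_pt _ _ _ _ _ _ (by decide), inner_pt _ _ _ _ _ _ (by decide),
    inner_pt _ _ _ _ _ _ (by decide)]
  simp

end Stmt11

namespace Stmt11

lemma step_a_A (μ : St × ℤ → ℝ) (i : Fin 3) (n : ℤ) :
    M.stepD μ (.letter .a) (.A i, n)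
      = (μ (.s0, n - coeff i) + μ (.B 0, n - coeff i) + μ (.B 1, n - coeff i)
          + μ (.B 2, n - coeff i)) / 3 + μ (.A i, n - coeff i) := by
  fin_cases i <;>
  · rw [stepD_eval, sum_St]
    simp only [dd]
    rw [inner_br, inner_pt _ _ _ _ _ _ (by decide), inner_pt _ _ _ _ _ _ (by decide),
      inner_pt _ _ _ _ _ _ (by decide), inner_br, inner_br, inner_br,
      inner_pt _ _ _ _ _ _ (by decide), inner_pt _ _ _ _ _ _ (by decide)]
    simp (config := { decide := true }) [coeff]
    try ring

lemma step_a_other (μ : St × ℤ → ℝ) (n : ℤ) (q' : St)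
    (h : q' = .s0 ∨ q' = .F ∨ ∃ i, q' = .B i) :
    M.stepD μ (.letter .a) (q', n) = 0 := by
  have : ∀ q'' : St, (q'' = .s0 ∨ q'' = .F ∨ ∃ i, q'' = .B i) →
      M.stepD μ (.letter .a) (q'', n) = 0 := by
    rintro q'' (rfl | rfl | ⟨i, rfl⟩) <;> try fin_cases i
    all_goals
    · rw [stepD_eval, sum_St]
      simp only [dd]
      rw [inner_br, inner_pt _ _ _ _ _ _ (by decide), inner_pt _ _ _ _ _ _ (by decide),
        inner_pt _ _ _ _ _ _ (by decide), inner_br, inner_br, inner_br,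
        inner_pt _ _ _ _ _ _ (by decide), inner_pt _ _ _ _ _ _ (by decide)]
      simp (config := { decide := true }) [coeff]
  exact this q' h

lemma step_b_B (μ : St × ℤ → ℝ) (i : Fin 3) (n : ℤ) :
    M.stepD μ (.letter .b) (.B i, n) = μ (.A i, n + coeff i) + μ (.B i, n + coeff i) := by
  fin_cases i <;>
  · rw [stepD_eval, sum_St]
    simp only [dd]
    rw [inner_pt _ _ _ _ _ _ (by decide), inner_pt _ _ _ _ _ _ (by decide),
      inner_pt _ _ _ _ _ _ (by decide), inner_pt _ _ _ _ _ _ (by decide),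
      inner_pt _ _ _ _ _ _ (by decide), inner_pt _ _ _ _ _ _ (by decide),
      inner_pt _ _ _ _ _ _ (by decide), inner_pt _ _ _ _ _ _ (by decide),
      inner_pt _ _ _ _ _ _ (by decide)]
    simp (config := { decide := true }) [coeff]
    try ring

lemma step_b_other (μ : St × ℤ → ℝ) (n : ℤ) (q' : St)
    (h : q' = .s0 ∨ q' = .F ∨ ∃ i, q' = .A i) :
    M.stepD μ (.letter .b) (q', n) = 0 := by
  have : ∀ q'' : St, (q'' = .s0 ∨ q'' = .F ∨ ∃ i, q'' = .A i) →
      M.stepD μ (.letter .b) (q'', n) = 0 := by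
    rintro q'' (rfl | rfl | ⟨i, rfl⟩) <;> try fin_cases i
    all_goals
    · rw [stepD_eval, sum_St]
      simp only [dd]
      rw [inner_pt _ _ _ _ _ _ (by decide), inner_pt _ _ _ _ _ _ (by decide),
        inner_pt _ _ _ _ _ _ (by decide), inner_pt _ _ _ _ _ _ (by decide),
        inner_pt _ _ _ _ _ _ (by decide), inner_pt _ _ _ _ _ _ (by decide),
        inner_pt _ _ _ _ _ _ (by decide), inner_pt _ _ _ _ _ _ (by decide),
        inner_pt _ _ _ _ _ _ (by decide)]
      simp (config := { decide := true }) [coeff]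
  exact this q' h

lemma step_cent_other (μ : St × ℤ → ℝ) (n : ℤ) (q' : St)
    (h : q' = .F ∨ (∃ i, q' = .A i) ∨ ∃ i, q' = .B i) :
    M.stepD μ .cent (q', n) = 0 := by
  have : ∀ q'' : St, (q'' = .F ∨ (∃ i, q'' = .A i) ∨ ∃ i, q'' = .B i) →
      M.stepD μ .cent (q'', n) = 0 := by
    rintro q'' (rfl | ⟨i, rfl⟩ | ⟨i, rfl⟩) <;> try fin_cases i
    all_goals
    · rw [stepD_eval, sum_St]
      simp only [dd]
      rw [inner_pt _ _ _ _ _ _ (by decide), inner_pt _ _ _ _ _ _ (by decide),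
        inner_pt _ _ _ _ _ _ (by decide), inner_pt _ _ _ _ _ _ (by decide),
        inner_pt _ _ _ _ _ _ (by decide), inner_pt _ _ _ _ _ _ (by decide),
        inner_pt _ _ _ _ _ _ (by decide), inner_pt _ _ _ _ _ _ (by decide),
        inner_pt _ _ _ _ _ _ (by decide)]
      simp (config := { decide := true }) [coeff]
  exact this q' h

lemma step_dollar_F (μ : St × ℤ → ℝ) (n : ℤ) :
    M.stepD μ .dollar (.F, n) = μ (.s0, n) + (μ (.B 0, n) + μ (.B 1, n) + μ (.B 2, n)) := by
  rw [stepD_eval, sum_St]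
  simp only [dd]
  rw [inner_pt _ _ _ _ _ _ (by decide), inner_pt _ _ _ _ _ _ (by decide),
    inner_pt _ _ _ _ _ _ (by decide), inner_pt _ _ _ _ _ _ (by decide),
    inner_pt _ _ _ _ _ _ (by decide), inner_pt _ _ _ _ _ _ (by decide),
    inner_pt _ _ _ _ _ _ (by decide), inner_pt _ _ _ _ _ _ (by decide),
    inner_pt _ _ _ _ _ _ (by decide)]
  simp (config := { decide := true }) [coeff]
  try ring

end Stmt11

namespace Stmt11

noncomputable def pp : List ℤ → ℤ → ℝ
  | [], n => if n = 0 then 1 else 0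
  | d :: ds, n => (pp ds (n - d) + pp ds (n - 2*d) + pp ds (n - 3*d)) / 3

lemma pp_nonneg (ds : List ℤ) (n : ℤ) : 0 ≤ pp ds n := by
  induction ds generalizing n with
  | nil => unfold pp; split <;> norm_num
  | cons d ds ih =>
    unfold pp
    have := ih (n - d); have := ih (n - 2*d); have := ih (n - 3*d)
    positivity

lemma pp_sum_le (ds : List ℤ) (S : Finset ℤ) : ∑ n ∈ S, pp ds n ≤ 1 := by
  induction ds generalizing S with
  | nil =>
    unfold pp
    rw [Finset.sum_ite_eq' S 0 (fun _ => (1:ℝ))]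
    split <;> norm_num
  | cons d ds ih =>
    unfold pp
    rw [← Finset.sum_div, Finset.sum_add_distrib, Finset.sum_add_distrib]
    have h1 : ∑ n ∈ S, pp ds (n - d) ≤ 1 := by
      have e : ∑ m ∈ S.image (fun n => n - (d)), pp ds m = ∑ n ∈ S, pp ds (n - d) :=
        Finset.sum_image (fun x _ y _ h => by omega)
      rw [← e]
      exact ih _
    have h2 : ∑ n ∈ S, pp ds (n - 2*d) ≤ 1 := by
      have e : ∑ m ∈ S.image (fun n => n - (2*d)), pp ds m = ∑ n ∈ S, pp ds (n - 2*d) :=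
        Finset.sum_image (fun x _ y _ h => by omega)
      rw [← e]
      exact ih _
    have h3 : ∑ n ∈ S, pp ds (n - 3*d) ≤ 1 := by
      have e : ∑ m ∈ S.image (fun n => n - (3*d)), pp ds m = ∑ n ∈ S, pp ds (n - 3*d) :=
        Finset.sum_image (fun x _ y _ h => by omega)
      rw [← e]
      exact ih _
    linarith

lemma pp_le_third {ds : List ℤ} (h : ∃ d ∈ ds, d ≠ 0) (n : ℤ) : pp ds n ≤ 1/3 := by
  induction ds generalizing n with
  | nil => simp at h
  | cons d ds ih =>
    rcases h with ⟨e, he, hne⟩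
    rcases List.mem_cons.mp he with rfl | hmem
    · unfold pp
      have key : pp ds (n - e) + pp ds (n - 2*e) + pp ds (n - 3*e) ≤ 1 := by
        have := pp_sum_le ds ({n - e, n - 2*e, n - 3*e} : Finset ℤ)
        rw [Finset.sum_insert (by simp; omega), Finset.sum_insert (by simp; omega),
          Finset.sum_singleton] at this
        linarith
      linarith
    · by_cases hd : d = 0
      · subst hd
        unfold pp
        have h1 := ih ⟨e, hmem, hne⟩ (n - 0)
        have h2 := ih ⟨e, hmem, hne⟩ (n - 2*0)
        have h3 := ih ⟨e, hmem, hne⟩ (n - 3*0)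
        linarith
      · unfold pp
        have key : pp ds (n - d) + pp ds (n - 2*d) + pp ds (n - 3*d) ≤ 1 := by
          have := pp_sum_le ds ({n - d, n - 2*d, n - 3*d} : Finset ℤ)
          rw [Finset.sum_insert (by simp; omega), Finset.sum_insert (by simp; omega),
            Finset.sum_singleton] at this
          linarith
        linarith

lemma pp_zero {ds : List ℤ} (h : ∀ d ∈ ds, d = 0) (n : ℤ) :
    pp ds n = if n = 0 then 1 else 0 := by
  induction ds generalizing n with
  | nil => rfl
  | cons d ds ih =>
    have hd : d = 0 := h d (by simp)
    subst hd
    unfold pp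
    rw [ih (fun e he => h e (by simp [he])), ih (fun e he => h e (by simp [he])),
      ih (fun e he => h e (by simp [he]))]
    norm_num
    split <;> norm_num

lemma pp_concat (ds : List ℤ) (d : ℤ) (n : ℤ) :
    pp (ds ++ [d]) n = (pp ds (n - d) + pp ds (n - 2*d) + pp ds (n - 3*d)) / 3 := by
  induction ds generalizing n with
  | nil => simp only [List.nil_append]; rfl
  | cons e ds ih =>
    show pp (e :: (ds ++ [d])) n = _
    unfold pp
    rw [ih, ih, ih]
    have c : ∀ x y : ℤ, n - x - y = n - y - x := by intro x y; ring
    rw [c d e, c (2*d) e, c (3*d) e, c d (2*e), c (2*d) (2*e), c (3*d) (2*e),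
      c d (3*e), c (2*d) (3*e), c (3*d) (3*e)]
    ring

/-- Phases of the block parser. -/
inductive Ph : Type
  | S : Ph
  | PA (j : ℕ) : Ph
  | PB (j l : ℕ) : Ph

/-- Parser state: `bad` or a list of completed blocks plus the current phase. -/
inductive PS : Type
  | bad : PS
  | good (bs : List (ℕ × ℕ)) (ph : Ph) : PS

def step0 : PS → Γ2 → PS
  | .bad, _ => .bad
  | .good bs .S, .a => .good bs (.PA 1)
  | .good _ .S, .b => .bad
  | .good bs (.PA j), .a => .good bs (.PA (j+1))
  | .good bs (.PA j), .b => .good bs (.PB j 1)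
  | .good bs (.PB j l), .a => .good (bs ++ [(j,l)]) (.PA 1)
  | .good bs (.PB j l), .b => .good bs (.PB j (l+1))

def parse (w : List Γ2) : PS := w.foldl step0 (.good [] .S)

def imb (bs : List (ℕ × ℕ)) : List ℤ := bs.map fun p => (p.1 : ℤ) - (p.2 : ℤ)

noncomputable def expSt : PS → St → ℤ → ℝ
  | .bad, _, _ => 0
  | .good bs ph, q, n =>
    match ph, q with
    | .S, .s0 => pp (imb bs) n
    | .PA j, .A i => pp (imb bs) (n - coeff i * (j : ℤ)) / 3
    | .PB j l, .B i => pp (imb bs) (n - coeff i * ((j : ℤ) - (l : ℤ))) / 3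
    | _, _ => 0

end Stmt11

namespace Stmt11

lemma coeff0 : coeff 0 = 1 := rfl
lemma coeff1 : coeff 1 = 2 := rfl
lemma coeff2 : coeff 2 = 3 := rfl

noncomputable def μpre (w : List Γ2) : St × ℤ → ℝ :=
  (TSym.cent :: w.map TSym.letter).foldl M.stepD M.initD

lemma μpre_concat (w : List Γ2) (x : Γ2) :
    μpre (w ++ [x]) = M.stepD (μpre w) (.letter x) := by
  unfold μpre
  rw [List.map_append]
  show List.foldl M.stepD M.initD ((TSym.cent :: w.map TSym.letter) ++ [TSym.letter x]) = _
  rw [List.foldl_concat]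

lemma parse_concat (w : List Γ2) (x : Γ2) :
    parse (w ++ [x]) = step0 (parse w) x := by
  unfold parse
  rw [List.foldl_concat]

lemma imb_concat (bs : List (ℕ × ℕ)) (j l : ℕ) :
    imb (bs ++ [(j,l)]) = imb bs ++ [(j:ℤ) - (l:ℤ)] := by simp [imb]

lemma inv (w : List Γ2) :
    ∀ q : St, q ≠ .D → ∀ n, μpre w (q, n) = expSt (parse w) q n := by
  induction w using List.reverseRecOn with
  | nil =>
    intro q hq n
    have hp : parse ([] : List Γ2) = .good [] .S := rfl
    have hμ : μpre ([] : List Γ2) = M.stepD M.initD .cent := rfl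
    rw [hp, hμ]
    cases q with
    | s0 =>
      rw [step_cent_s0]
      simp [OneP1BCA.initD, M, expSt, pp, imb, Prod.ext_iff]
    | A i => rw [step_cent_other _ _ _ (Or.inr (Or.inl ⟨i, rfl⟩))]; simp [expSt]
    | B i => rw [step_cent_other _ _ _ (Or.inr (Or.inr ⟨i, rfl⟩))]; simp [expSt]
    | F => rw [step_cent_other _ _ _ (Or.inl rfl)]; simp [expSt]
    | D => exact absurd rfl hq
  | append_singleton w x ih =>
    intro q hq n
    rw [μpre_concat, parse_concat]
    have ihs0 : ∀ n, μpre w (.s0, n) = expSt (parse w) .s0 n :=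
      ih .s0 (fun h => St.noConfusion h)
    have ihA : ∀ i n, μpre w (.A i, n) = expSt (parse w) (.A i) n :=
      fun i => ih (.A i) (fun h => St.noConfusion h)
    have ihB : ∀ i n, μpre w (.B i, n) = expSt (parse w) (.B i) n :=
      fun i => ih (.B i) (fun h => St.noConfusion h)
    cases q with
    | D => exact absurd rfl hq
    | s0 =>
      cases x with
      | a =>
        rw [step_a_other _ _ _ (Or.inl rfl)]
        rcases parse w with _ | ⟨bs, _ | j | ⟨j,l⟩⟩ <;> simp [step0, expSt]
      | b =>
        rw [step_b_other _ _ _ (Or.inl rfl)]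
        rcases parse w with _ | ⟨bs, _ | j | ⟨j,l⟩⟩ <;> simp [step0, expSt]
    | F =>
      cases x with
      | a =>
        rw [step_a_other _ _ _ (Or.inr (Or.inl rfl))]
        rcases parse w with _ | ⟨bs, _ | j | ⟨j,l⟩⟩ <;> simp [step0, expSt]
      | b =>
        rw [step_b_other _ _ _ (Or.inr (Or.inl rfl))]
        rcases parse w with _ | ⟨bs, _ | j | ⟨j,l⟩⟩ <;> simp [step0, expSt]
    | B i =>
      cases x with
      | a =>
        rw [step_a_other _ _ _ (Or.inr (Or.inr ⟨i, rfl⟩))]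
        rcases parse w with _ | ⟨bs, _ | j | ⟨j,l⟩⟩ <;> simp [step0, expSt]
      | b =>
        rw [step_b_B]
        rcases hps : parse w with _ | ⟨bs, _ | j | ⟨j,l⟩⟩ <;> rw [hps] at ihs0 ihA ihB <;>
          simp only [step0] <;> rw [ihA i, ihB i] <;> simp only [expSt]
        · -- bad
          norm_num
        · -- S → bad
          norm_num
        · -- PA j → PB j 1
          rw [add_zero]
          congr 1
          push_cast
          ring
        · -- PB j l → PB j (l+1)
          rw [zero_add]
          congr 1
          congr 1
          push_cast
          ring
    | A i =>
      cases x with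
      | b =>
        rw [step_b_other _ _ _ (Or.inr (Or.inr ⟨i, rfl⟩))]
        rcases parse w with _ | ⟨bs, _ | j | ⟨j,l⟩⟩ <;> simp [step0, expSt]
      | a =>
        rw [step_a_A]
        rcases hps : parse w with _ | ⟨bs, _ | j | ⟨j,l⟩⟩ <;> rw [hps] at ihs0 ihA ihB <;>
          simp only [step0] <;>
          rw [ihs0, ihA i, ihB 0, ihB 1, ihB 2] <;> simp only [expSt]
        · -- bad
          norm_num
        · -- S -> PA 1
          simp only [Nat.cast_one, mul_one]
          norm_num
        · -- PA j -> PA (j+1)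
          push_cast
          rw [show n - coeff i * ((j:ℤ) + 1) = n - coeff i - coeff i * (j:ℤ) from by ring]
          norm_num
        · -- PB j l -> new block
          rw [imb_concat, pp_concat]
          simp only [coeff0, coeff1, coeff2, Nat.cast_one, mul_one, one_mul]
          ring

end Stmt11

namespace Stmt11

noncomputable def av : PS → ℝ
  | .bad => 0
  | .good bs .S => pp (imb bs) 0
  | .good _ (.PA _) => 0
  | .good bs (.PB j l) => pp (imb bs ++ [(j:ℤ) - (l:ℤ)]) 0

lemma finalD_eq (w : List Γ2) : M.finalD w = M.stepD (μpre w) .dollar := by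
  unfold OneP1BCA.finalD tagged μpre
  rw [show TSym.cent :: (w.map TSym.letter ++ [TSym.dollar])
      = (TSym.cent :: w.map TSym.letter) ++ [TSym.dollar] from rfl, List.foldl_concat]

lemma accProb_eq (w : List Γ2) : M.accProb w = av (parse w) := by
  unfold OneP1BCA.accProb
  have hacc : M.acc = {St.F} := rfl
  rw [hacc, Finset.sum_singleton, finalD_eq, step_dollar_F]
  have h0 := inv w .s0 (fun h => St.noConfusion h) 0
  have hB := fun i => inv w (.B i) (fun h => St.noConfusion h) 0
  rw [h0, hB 0, hB 1, hB 2]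
  rcases parse w with _ | ⟨bs, _ | j | ⟨j,l⟩⟩ <;> simp only [expSt, av]
  · norm_num
  · norm_num
  · norm_num
  · rw [pp_concat]
    simp only [coeff0, coeff1, coeff2, one_mul]
    ring

def flat (bs : List (ℕ × ℕ)) : List Γ2 :=
  (bs.map fun p => List.replicate p.1 Γ2.a ++ List.replicate p.2 Γ2.b).flatten

def posb (bs : List (ℕ × ℕ)) : Prop := ∀ p ∈ bs, 0 < p.1 ∧ 0 < p.2

lemma flat_concat (bs : List (ℕ × ℕ)) (j l : ℕ) :
    flat (bs ++ [(j,l)]) = flat bs ++ (List.replicate j Γ2.a ++ List.replicate l Γ2.b) := by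
  simp [flat]

lemma reconstruct (w : List Γ2) : ∀ bs ph, parse w = .good bs ph →
    posb bs ∧ (match ph with
      | .S => w = flat bs
      | .PA j => 0 < j ∧ w = flat bs ++ List.replicate j Γ2.a
      | .PB j l => 0 < j ∧ 0 < l ∧
          w = flat bs ++ List.replicate j Γ2.a ++ List.replicate l Γ2.b) := by
  induction w using List.reverseRecOn with
  | nil =>
    intro bs ph h
    have h' : PS.good [] .S = .good bs ph := h
    injection h' with h1 h2
    subst h1; subst h2
    exact ⟨fun p hp => absurd hp List.not_mem_nil, rfl⟩
  | append_singleton w x ih =>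
    intro bs ph h
    rw [parse_concat] at h
    rcases hps : parse w with _ | ⟨bs', ph'⟩ <;> rw [hps] at h
    · simp [step0] at h
    rcases ph' with _ | j' | ⟨j', l'⟩ <;> rcases x with _ | _ <;> simp only [step0] at h <;>
      obtain ⟨hpos, hrest⟩ := ih bs' _ hps
    · -- S, a
      cases h
      exact ⟨hpos, Nat.one_pos, by rw [hrest]; simp⟩
    · -- S, b : bad = good, contradiction
      exact absurd h (fun hh => PS.noConfusion hh)
    · -- PA j', a
      cases h
      obtain ⟨hj, hw⟩ := hrest
      refine ⟨hpos, Nat.lt_of_lt_of_le hj (Nat.le_succ _), ?_⟩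
      rw [hw, List.replicate_succ' , ← List.append_assoc]
    · -- PA j', b
      cases h
      obtain ⟨hj, hw⟩ := hrest
      exact ⟨hpos, hj, Nat.one_pos, by rw [hw]; simp⟩
    · -- PB j' l', a
      cases h
      obtain ⟨hj, hl, hw⟩ := hrest
      refine ⟨?_, Nat.one_pos, ?_⟩
      · intro p hp
        rcases List.mem_append.mp hp with hp | hp
        · exact hpos p hp
        · rcases List.mem_singleton.mp hp with rfl
          exact ⟨hj, hl⟩
      · rw [flat_concat, hw]
        simp
    · -- PB j' l', b
      cases h
      obtain ⟨hj, hl, hw⟩ := hrest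
      refine ⟨hpos, hj, Nat.lt_of_lt_of_le hl (Nat.le_succ _), ?_⟩
      rw [hw, List.replicate_succ' , ← List.append_assoc]

lemma flat_mem {bs : List (ℕ × ℕ)} (hpos : posb bs) (hz : ∀ d ∈ imb bs, d = 0) :
    flat bs ∈ EQstar := by
  rw [EQstar, Language.mem_kstar]
  refine ⟨bs.map fun p => List.replicate p.1 Γ2.a ++ List.replicate p.2 Γ2.b, ?_, ?_⟩
  · rfl
  intro y hy
  rcases List.mem_map.mp hy with ⟨⟨j, l⟩, hmem, rfl⟩
  have hjl : (j:ℤ) - (l:ℤ) = 0 := hz _ (List.mem_map.mpr ⟨(j,l), hmem, rfl⟩)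
  have : j = l := by omega
  subst this
  exact ⟨j, (hpos _ hmem).1, rfl⟩

def pFrom (st : PS) (u : List Γ2) : PS := u.foldl step0 st

lemma parse_append (u v : List Γ2) : parse (u ++ v) = pFrom (parse u) v := by
  unfold parse pFrom
  rw [List.foldl_append]

lemma pFrom_repA (bs : List (ℕ × ℕ)) (j n : ℕ) :
    pFrom (.good bs (.PA j)) (List.replicate n Γ2.a) = .good bs (.PA (j + n)) := by
  induction n generalizing j with
  | zero => rfl
  | succ n ihn =>
    rw [List.replicate_succ]
    show pFrom (step0 (.good bs (.PA j)) .a) (List.replicate n Γ2.a) = _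
    rw [show step0 (PS.good bs (.PA j)) .a = .good bs (.PA (j+1)) from rfl, ihn,
      show j + 1 + n = j + (n + 1) from by omega]

lemma pFrom_repB (bs : List (ℕ × ℕ)) (j l n : ℕ) :
    pFrom (.good bs (.PB j l)) (List.replicate n Γ2.b) = .good bs (.PB j (l + n)) := by
  induction n generalizing l with
  | zero => rfl
  | succ n ihn =>
    rw [List.replicate_succ]
    show pFrom (step0 (.good bs (.PB j l)) .b) (List.replicate n Γ2.b) = _
    rw [show step0 (PS.good bs (.PB j l)) .b = .good bs (.PB j (l+1)) from rfl, ihn,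
      show l + 1 + n = l + (n + 1) from by omega]

lemma pFrom_append (st : PS) (u v : List Γ2) :
    pFrom st (u ++ v) = pFrom (pFrom st u) v := by
  unfold pFrom
  rw [List.foldl_append]

lemma pFrom_block_S (bs : List (ℕ × ℕ)) {n : ℕ} (h : 0 < n) :
    pFrom (.good bs .S) (List.replicate n Γ2.a ++ List.replicate n Γ2.b)
      = .good bs (.PB n n) := by
  obtain ⟨m, rfl⟩ : ∃ m, n = m + 1 := ⟨n - 1, by omega⟩
  rw [pFrom_append]
  rw [show List.replicate (m+1) Γ2.a = Γ2.a :: List.replicate m Γ2.a from List.replicate_succ]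
  show pFrom (pFrom (step0 (.good bs .S) .a) (List.replicate m Γ2.a)) _ = _
  rw [show step0 (PS.good bs .S) .a = .good bs (.PA 1) from rfl, pFrom_repA]
  rw [show List.replicate (m+1) Γ2.b = Γ2.b :: List.replicate m Γ2.b from List.replicate_succ]
  show pFrom (step0 (.good bs (.PA (1+m))) .b) (List.replicate m Γ2.b) = _
  rw [show step0 (PS.good bs (.PA (1+m))) .b = .good bs (.PB (1+m) 1) from rfl, pFrom_repB,
    show (1:ℕ) + m = m + 1 from by omega]

lemma pFrom_block_PB (bs : List (ℕ × ℕ)) (j l : ℕ) {n : ℕ} (h : 0 < n) :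
    pFrom (.good bs (.PB j l)) (List.replicate n Γ2.a ++ List.replicate n Γ2.b)
      = .good (bs ++ [(j,l)]) (.PB n n) := by
  obtain ⟨m, rfl⟩ : ∃ m, n = m + 1 := ⟨n - 1, by omega⟩
  rw [pFrom_append]
  rw [show List.replicate (m+1) Γ2.a = Γ2.a :: List.replicate m Γ2.a from List.replicate_succ]
  show pFrom (pFrom (step0 (.good bs (.PB j l)) .a) (List.replicate m Γ2.a)) _ = _
  rw [show step0 (PS.good bs (.PB j l)) .a = .good (bs ++ [(j,l)]) (.PA 1) from rfl, pFrom_repA]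
  rw [show List.replicate (m+1) Γ2.b = Γ2.b :: List.replicate m Γ2.b from List.replicate_succ]
  show pFrom (step0 (.good (bs ++ [(j,l)]) (.PA (1+m))) .b) (List.replicate m Γ2.b) = _
  rw [show step0 (PS.good (bs ++ [(j,l)]) (.PA (1+m))) .b
      = .good (bs ++ [(j,l)]) (.PB (1+m) 1) from rfl, pFrom_repB,
    show (1:ℕ) + m = m + 1 from by omega]

lemma eqstar_parse {w : List Γ2} (hw : w ∈ EQstar) :
    (∃ bs, parse w = .good bs .S ∧ ∀ d ∈ imb bs, d = 0)
    ∨ (∃ bs j l, parse w = .good bs (.PB j l) ∧ (∀ d ∈ imb bs, d = 0) ∧ (j:ℤ) = (l:ℤ)) := by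
  rw [EQstar, Language.mem_kstar] at hw
  obtain ⟨L, rfl, hL⟩ := hw
  induction L using List.reverseRecOn with
  | nil => exact Or.inl ⟨[], rfl, by simp [imb]⟩
  | append_singleton L u ihL =>
    obtain ⟨n, hn, hu⟩ := hL u (by simp)
    have hflat : (L ++ [u]).flatten = L.flatten ++ u := by
      rw [List.flatten_append]; simp
    rw [hflat, hu, parse_append]
    rcases ihL (fun y hy => hL y (by simp [hy])) with ⟨bs, hp, hz⟩ | ⟨bs, j, l, hp, hz, hjl⟩
    · rw [hp, pFrom_block_S _ hn]
      exact Or.inr ⟨bs, n, n, rfl, hz, rfl⟩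
    · rw [hp, pFrom_block_PB _ _ _ hn]
      refine Or.inr ⟨bs ++ [(j,l)], n, n, rfl, ?_, rfl⟩
      intro d hd
      rw [imb_concat] at hd
      rcases List.mem_append.mp hd with hd | hd
      · exact hz d hd
      · rcases List.mem_singleton.mp hd with rfl
        omega

end Stmt11

/-- a 1P1BCA recognizes `EQ*` with negative one-sided error bound `1/3`. -/
theorem stmt11 : ∃ M : OneP1BCA Γ2,
    (∀ w ∈ EQstar, M.accProb w = 1) ∧ (∀ w ∉ EQstar, M.accProb w ≤ 1 / 3) := by
  refine ⟨Stmt11.M, ?_, ?_⟩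
  · intro w hw
    rw [Stmt11.accProb_eq]
    rcases Stmt11.eqstar_parse hw with ⟨bs, hp, hz⟩ | ⟨bs, j, l, hp, hz, hjl⟩
    · rw [hp]
      show Stmt11.pp (Stmt11.imb bs) 0 = 1
      rw [Stmt11.pp_zero hz]
      norm_num
    · rw [hp]
      show Stmt11.pp (Stmt11.imb bs ++ [(j:ℤ) - (l:ℤ)]) 0 = 1
      rw [Stmt11.pp_zero]
      · norm_num
      · intro d hd
        rcases List.mem_append.mp hd with hd | hd
        · exact hz d hd
        · rcases List.mem_singleton.mp hd with rfl
          omega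
  · intro w hw
    rw [Stmt11.accProb_eq]
    rcases hps : Stmt11.parse w with _ | ⟨bs, _ | j | ⟨j,l⟩⟩
    · show (0:ℝ) ≤ 1/3; norm_num
    · -- S phase
      obtain ⟨hpos, hflat⟩ := Stmt11.reconstruct w bs _ hps
      by_cases hz : ∀ d ∈ Stmt11.imb bs, d = 0
      · exact absurd (hflat ▸ Stmt11.flat_mem hpos hz) hw
      · push_neg at hz
        exact le_trans (Stmt11.pp_le_third hz 0) (by norm_num)
    · show (0:ℝ) ≤ 1/3; norm_num
    · -- PB phase
      obtain ⟨hpos, hj, hl, hflat⟩ := Stmt11.reconstruct w bs _ hps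
      by_cases hz : ∀ d ∈ Stmt11.imb (bs ++ [(j,l)]), d = 0
      · have hmem : w ∈ EQstar := by
          have hpos' : Stmt11.posb (bs ++ [(j,l)]) := by
            intro p hp
            rcases List.mem_append.mp hp with hp | hp
            · exact hpos p hp
            · rcases List.mem_singleton.mp hp with rfl; exact ⟨hj, hl⟩
          have := Stmt11.flat_mem hpos' hz
          rw [Stmt11.flat_concat, ← List.append_assoc, ← hflat] at this
          exact this
        exact absurd hmem hw
      · push_neg at hz
        rw [Stmt11.imb_concat] at hz
        exact le_trans (Stmt11.pp_le_third hz 0) (by norm_num)
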